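/- arXiv:1511.03616 — 2 statements merged into one kernel-verified Lean document; each statement's English description precedes it below -/
import Mathlib

section
/- (Deterministic form of Lemma 3.3(iii)c) Suppose α_P^high > α_A^high > 0. Then the supremum of F(a,z,γ,δ,α_P^high,α_A^high) over all deterministic actions a, all z ∈ ℝ, all δ ∈ ℝ, and all γ with -R_P(1-z)² < γ < R_A z², equals G(a*, z*, α_A^high). -/
open MeasureTheory

/-- The objective `F(a,z,γ,δ,α_P,α_A)` from the first-best problem. -/
noncomputable def Fobj (R_A R_P ρ T : ℝ) (k a : ℝ → ℝ) (z γ δ αP αA : ℝ) : ℝ :=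
  -Real.exp (R_P * (δ - (1 - z) * (∫ s in (0:ℝ)..T, a s)
      + (R_P * (1 - z) ^ 2 / 2 + γ / 2) * αP * T))
  - ρ * Real.exp (R_A * ((∫ s in (0:ℝ)..T, k (a s))
      - z * (∫ s in (0:ℝ)..T, a s) - δ + (R_A * z ^ 2 / 2 - γ / 2) * αA * T))

/-- The quantity `G(a,z,γ,α_P,α_A)`. -/
noncomputable def Gobj (R_A R_P ρ T : ℝ) (k a : ℝ → ℝ) (z γ αP αA : ℝ) : ℝ :=
  -(ρ ^ (R_P / (R_A + R_P)) * ((R_A + R_P) / R_P)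
      * (R_A / R_P) ^ (-(R_A / (R_A + R_P)))
      * Real.exp ((R_A * R_P / (R_A + R_P)) * ((∫ s in (0:ℝ)..T, (k (a s) - a s))
          + γ / 2 * T * (αP - αA)
          + T / 2 * (αP * R_P * (1 - z) ^ 2 + αA * R_A * z ^ 2))))

/-- A deterministic action: a measurable map `[0,T] → [0, a_max]`. -/
def IsAction (T aMax : ℝ) (a : ℝ → ℝ) : Prop :=
  Measurable a ∧ ∀ s ∈ Set.Icc (0 : ℝ) T, a s ∈ Set.Icc (0 : ℝ) aMax

/-!
Writing `F = -(exp (R_P (δ + c)) + ρ exp (R_A (d - δ)))`, the sum `c + d` does not depend on `δ`,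
and weighted AM–GM (weights `R_A/(R_A+R_P)`, `R_P/(R_A+R_P)`) shows that the supremum over `δ` is
`G(a,z,γ,α_P,α_A)`, attained where the two terms balance. The exponent of `G` splits as
`∫ (k a - a) + T/2 (γ + R_P(1-z)²)(α_P - α_A) + T/2 α_A (R_P(1-z)² + R_A z²)`: the first term is
minimal at `a*`, the second is positive and tends to `0` as `γ ↓ -R_P(1-z)²` because `α_P > α_A`,
and the quadratic is minimal at `z*`. Hence the supremum is `G(a*,z*,α_A)`, approached but not
attained.
-/

open Real Set

noncomputable def expSumMinConst (R_A R_P ρ : ℝ) : ℝ :=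
  ρ ^ (R_P / (R_A + R_P)) * ((R_A + R_P) / R_P) * (R_A / R_P) ^ (-(R_A / (R_A + R_P)))

section ExpSum

variable {R_A R_P ρ : ℝ}

lemma rpow_mul_rpow_exp_eq_expSumMinConst_mul_exp (hRA : 0 < R_A) (hRP : 0 < R_P) (hρ : 0 < ρ)
    (u v : ℝ) :
    (exp (R_P * u) / (R_A / (R_A + R_P))) ^ (R_A / (R_A + R_P))
      * (ρ * exp (R_A * v) / (R_P / (R_A + R_P))) ^ (R_P / (R_A + R_P))
    = expSumMinConst R_A R_P ρ * exp (R_A * R_P / (R_A + R_P) * (u + v)) := by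
  have hsum : 0 < R_A + R_P := add_pos hRA hRP
  have hwA : 0 < R_A / (R_A + R_P) := div_pos hRA hsum
  have hwP : 0 < R_P / (R_A + R_P) := div_pos hRP hsum
  rw [expSumMinConst, rpow_def_of_pos (div_pos (exp_pos _) hwA),
    rpow_def_of_pos (div_pos (mul_pos hρ (exp_pos _)) hwP), rpow_def_of_pos hρ,
    rpow_def_of_pos (div_pos hRA hRP), ← exp_log (div_pos hsum hRP),
    log_div (exp_ne_zero _) hwA.ne', log_div (mul_pos hρ (exp_pos _)).ne' hwP.ne',
    log_mul hρ.ne' (exp_ne_zero _), log_exp, log_exp, log_div hRA.ne' hsum.ne',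
    log_div hRP.ne' hsum.ne', log_div hRA.ne' hRP.ne', log_div hsum.ne' hRP.ne',
    ← exp_add, ← exp_add, ← exp_add, ← exp_add]
  congr 1
  field_simp
  ring

lemma expSumMinConst_mul_exp_le (hRA : 0 < R_A) (hRP : 0 < R_P) (hρ : 0 < ρ) (δ c d : ℝ) :
    expSumMinConst R_A R_P ρ * exp (R_A * R_P / (R_A + R_P) * (c + d))
      ≤ exp (R_P * (δ + c)) + ρ * exp (R_A * (d - δ)) := by
  have hsum : 0 < R_A + R_P := add_pos hRA hRP
  have hwA : 0 < R_A / (R_A + R_P) := div_pos hRA hsum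
  have hwP : 0 < R_P / (R_A + R_P) := div_pos hRP hsum
  have amgm := geom_mean_le_arith_mean2_weighted hwA.le hwP.le
    (div_pos (exp_pos (R_P * (δ + c))) hwA).le
    (div_pos (mul_pos hρ (exp_pos (R_A * (d - δ)))) hwP).le
    (by field_simp)
  rwa [rpow_mul_rpow_exp_eq_expSumMinConst_mul_exp hRA hRP hρ,
    show δ + c + (d - δ) = c + d by ring, mul_div_cancel₀ _ hwA.ne',
    mul_div_cancel₀ _ hwP.ne'] at amgm

lemma exists_exp_add_exp_eq_expSumMinConst_mul_exp (hRA : 0 < R_A) (hRP : 0 < R_P) (hρ : 0 < ρ)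
    (c d : ℝ) :
    ∃ δ, exp (R_P * (δ + c)) + ρ * exp (R_A * (d - δ))
      = expSumMinConst R_A R_P ρ * exp (R_A * R_P / (R_A + R_P) * (c + d)) := by
  have hsum : 0 < R_A + R_P := add_pos hRA hRP
  have hwA : 0 < R_A / (R_A + R_P) := div_pos hRA hsum
  have hwP : 0 < R_P / (R_A + R_P) := div_pos hRP hsum
  -- equality in AM–GM: choose `δ` so that both normalised terms equal a common value `w`
  set δ := (log ρ + log R_A - log R_P + R_A * d - R_P * c) / (R_A + R_P)
  set w := exp (R_P * (δ + c)) / (R_A / (R_A + R_P))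
  have hbalance : R_P * (δ + c) + log R_P = log ρ + log R_A + R_A * (d - δ) := by
    simp only [δ]; field_simp; ring
  have hw : ρ * exp (R_A * (d - δ)) / (R_P / (R_A + R_P)) = w := by
    have := congrArg exp hbalance
    rw [exp_add, exp_add, exp_add, exp_log hRP, exp_log hρ, exp_log hRA] at this
    simp only [w]
    field_simp
    linarith
  refine ⟨δ, ?_⟩
  rw [show c + d = δ + c + (d - δ) by ring,
    ← rpow_mul_rpow_exp_eq_expSumMinConst_mul_exp hRA hRP hρ, hw,
    ← rpow_add (div_pos (exp_pos _) hwA), show R_A / (R_A + R_P) + R_P / (R_A + R_P) = 1 by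
      field_simp, rpow_one]
  calc exp (R_P * (δ + c)) + ρ * exp (R_A * (d - δ))
      = R_A / (R_A + R_P) * w
          + R_P / (R_A + R_P) * (ρ * exp (R_A * (d - δ)) / (R_P / (R_A + R_P))) := by
        simp only [w]; field_simp
    _ = w := by rw [hw]; field_simp

end ExpSum

lemma isMinOn_mul_one_sub_sq_add_mul_sq {R_A R_P : ℝ} (hsum : 0 < R_A + R_P) :
    IsMinOn (fun z => R_P * (1 - z) ^ 2 + R_A * z ^ 2) univ (R_P / (R_A + R_P)) := by
  refine isMinOn_univ_iff.2 fun z => ?_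
  have hgap : R_P * (1 - z) ^ 2 + R_A * z ^ 2
      - (R_P * (1 - R_P / (R_A + R_P)) ^ 2 + R_A * (R_P / (R_A + R_P)) ^ 2)
      = (R_A + R_P) * (z - R_P / (R_A + R_P)) ^ 2 := by
    field_simp
    ring
  have : 0 ≤ (R_A + R_P) * (z - R_P / (R_A + R_P)) ^ 2 := by positivity
  linarith

lemma IsAction.intervalIntegrable_comp {T aMax : ℝ} {a f : ℝ → ℝ} (ha : IsAction T aMax a)
    (hT : 0 ≤ T) (hf : Monotone f) : IntervalIntegrable (fun s => f (a s)) volume 0 T := by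
  refine IntervalIntegrable.mono_fun' (g := fun _ => max |f 0| |f aMax|) intervalIntegrable_const
    (hf.measurable.comp ha.1).aestronglyMeasurable ?_
  rw [uIoc_of_le hT]
  filter_upwards [ae_restrict_mem measurableSet_Ioc] with s hs
  have has := ha.2 s ⟨hs.1.le, hs.2⟩
  exact abs_le_max_abs_abs (hf has.1) (hf has.2)

noncomputable def Gexponent (R_A R_P T : ℝ) (k a : ℝ → ℝ) (z γ αP αA : ℝ) : ℝ :=
  (∫ s in (0:ℝ)..T, (k (a s) - a s)) + γ / 2 * T * (αP - αA)
    + T / 2 * (αP * R_P * (1 - z) ^ 2 + αA * R_A * z ^ 2)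

section Objectives

variable {R_A R_P ρ T : ℝ} {k a : ℝ → ℝ} {z γ αP αA : ℝ}

lemma Gobj_eq_neg_expSumMinConst_mul_exp :
    Gobj R_A R_P ρ T k a z γ αP αA = -(expSumMinConst R_A R_P ρ
      * exp (R_A * R_P / (R_A + R_P) * Gexponent R_A R_P T k a z γ αP αA)) :=
  rfl

lemma Fobj_eq_neg_exp_add_exp (ha : IntervalIntegrable a volume 0 T)
    (hka : IntervalIntegrable (fun s => k (a s)) volume 0 T) :
    ∃ c d, c + d = Gexponent R_A R_P T k a z γ αP αA ∧ ∀ δ,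
      Fobj R_A R_P ρ T k a z γ δ αP αA = -(exp (R_P * (δ + c)) + ρ * exp (R_A * (d - δ))) := by
  refine ⟨(R_P * (1 - z) ^ 2 / 2 + γ / 2) * αP * T - (1 - z) * ∫ s in (0:ℝ)..T, a s,
    (∫ s in (0:ℝ)..T, k (a s)) - z * (∫ s in (0:ℝ)..T, a s) + (R_A * z ^ 2 / 2 - γ / 2) * αA * T,
    ?_, fun δ => ?_⟩
  · rw [Gexponent, intervalIntegral.integral_sub hka ha]
    ring
  · rw [Fobj, neg_add, ← sub_eq_add_neg]
    ring_nf

lemma Fobj_le_Gobj (hRA : 0 < R_A) (hRP : 0 < R_P) (hρ : 0 < ρ)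
    (ha : IntervalIntegrable a volume 0 T) (hka : IntervalIntegrable (fun s => k (a s)) volume 0 T)
    (δ : ℝ) : Fobj R_A R_P ρ T k a z γ δ αP αA ≤ Gobj R_A R_P ρ T k a z γ αP αA := by
  obtain ⟨c, d, hcd, hF⟩ := Fobj_eq_neg_exp_add_exp (R_A := R_A) (R_P := R_P) (ρ := ρ) (z := z)
    (γ := γ) (αP := αP) (αA := αA) ha hka
  rw [hF, Gobj_eq_neg_expSumMinConst_mul_exp, ← hcd]
  exact neg_le_neg (expSumMinConst_mul_exp_le hRA hRP hρ δ c d)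

lemma exists_Fobj_eq_Gobj (hRA : 0 < R_A) (hRP : 0 < R_P) (hρ : 0 < ρ)
    (ha : IntervalIntegrable a volume 0 T)
    (hka : IntervalIntegrable (fun s => k (a s)) volume 0 T) :
    ∃ δ, Fobj R_A R_P ρ T k a z γ δ αP αA = Gobj R_A R_P ρ T k a z γ αP αA := by
  obtain ⟨c, d, hcd, hF⟩ := Fobj_eq_neg_exp_add_exp (R_A := R_A) (R_P := R_P) (ρ := ρ) (z := z)
    (γ := γ) (αP := αP) (αA := αA) ha hka
  obtain ⟨δ, hδ⟩ := exists_exp_add_exp_eq_expSumMinConst_mul_exp hRA hRP hρ c d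
  exact ⟨δ, by rw [hF, hδ, Gobj_eq_neg_expSumMinConst_mul_exp, hcd]⟩

lemma Gobj_le_Gobj_of_Gexponent_le (hRA : 0 < R_A) (hRP : 0 < R_P) (hρ : 0 < ρ)
    {a' : ℝ → ℝ} {z' γ' αP' αA' : ℝ}
    (h : Gexponent R_A R_P T k a' z' γ' αP' αA' ≤ Gexponent R_A R_P T k a z γ αP αA) :
    Gobj R_A R_P ρ T k a z γ αP αA ≤ Gobj R_A R_P ρ T k a' z' γ' αP' αA' := by
  rw [Gobj_eq_neg_expSumMinConst_mul_exp, Gobj_eq_neg_expSumMinConst_mul_exp, neg_le_neg_iff]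
  unfold expSumMinConst
  gcongr

lemma continuous_Gobj_gamma :
    Continuous fun γ => Gobj R_A R_P ρ T k a z γ αP αA := by
  unfold Gobj
  fun_prop

lemma Gexponent_neg_sq (γ' : ℝ) :
    Gexponent R_A R_P T k a z (-(R_P * (1 - z) ^ 2)) αP αA
      = Gexponent R_A R_P T k a z γ' αA αA := by
  unfold Gexponent
  ring

end Objectives

lemma Gexponent_le_Gexponent {R_A R_P T aMax : ℝ} {k a : ℝ → ℝ} {astar z γ αP αA : ℝ}
    (hsum : 0 < R_A + R_P) (hT : 0 ≤ T) (hαA : 0 ≤ αA) (hα : αA ≤ αP)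
    (hastar_min : ∀ x ∈ Icc (0 : ℝ) aMax, k astar - astar ≤ k x - x) (ha : IsAction T aMax a)
    (hint : IntervalIntegrable (fun s => k (a s) - a s) volume 0 T)
    (hγ : -(R_P * (1 - z) ^ 2) < γ) :
    Gexponent R_A R_P T k (fun _ => astar) (R_P / (R_A + R_P))
        (-(R_P * (1 - R_P / (R_A + R_P)) ^ 2)) αP αA
      ≤ Gexponent R_A R_P T k a z γ αP αA := by
  have hcost : ∫ _ in (0:ℝ)..T, (k astar - astar) ≤ ∫ s in (0:ℝ)..T, (k (a s) - a s) :=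
    intervalIntegral.integral_mono_on hT intervalIntegrable_const hint
      fun s hs => hastar_min _ (ha.2 s hs)
  have hshare : 0 ≤ T * (γ + R_P * (1 - z) ^ 2) * (αP - αA) := by
    have : 0 < γ + R_P * (1 - z) ^ 2 := by linarith
    have : 0 ≤ αP - αA := by linarith
    positivity
  have hrisk : 0 ≤ T * αA * (R_P * (1 - z) ^ 2 + R_A * z ^ 2
      - (R_P * (1 - R_P / (R_A + R_P)) ^ 2 + R_A * (R_P / (R_A + R_P)) ^ 2)) :=
    mul_nonneg (mul_nonneg hT hαA)
      (sub_nonneg.2 (isMinOn_univ_iff.1 (isMinOn_mul_one_sub_sq_add_mul_sq hsum) z))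
  unfold Gexponent
  linear_combination hcost + hshare / 2 + hrisk / 2

theorem sup_Q_mid_high_general (R_A R_P ρ T aMax : ℝ) (k : ℝ → ℝ)
    (hRA : 0 < R_A) (hRP : 0 < R_P) (hρ : 0 < ρ) (hT : 0 < T)
    (hkmono : StrictMono k)
    (astar : ℝ) (hastar_mem : astar ∈ Set.Icc (0 : ℝ) aMax)
    (hastar_min : ∀ x ∈ Set.Icc (0 : ℝ) aMax, k astar - astar ≤ k x - x)
    (αPhigh αAhigh : ℝ) (hαA : 0 < αAhigh) (hlt : αAhigh < αPhigh) :
    IsLUB {x : ℝ | ∃ a z γ δ, IsAction T aMax a ∧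
        -(R_P * (1 - z) ^ 2) < γ ∧ γ < R_A * z ^ 2 ∧
        x = Fobj R_A R_P ρ T k a z γ δ αPhigh αAhigh}
      (Gobj R_A R_P ρ T k (fun _ => astar) (R_P / (R_A + R_P)) 0 αAhigh αAhigh) := by
  have hsum : 0 < R_A + R_P := add_pos hRA hRP
  set zstar := R_P / (R_A + R_P)
  set γstar := -(R_P * (1 - zstar) ^ 2)
  have hG : Gobj R_A R_P ρ T k (fun _ => astar) zstar 0 αAhigh αAhigh
      = Gobj R_A R_P ρ T k (fun _ => astar) zstar γstar αPhigh αAhigh := by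
    rw [Gobj_eq_neg_expSumMinConst_mul_exp, Gobj_eq_neg_expSumMinConst_mul_exp, Gexponent_neg_sq]
  have hastar : IsAction T aMax fun _ => astar := ⟨measurable_const, fun _ _ => hastar_mem⟩
  rw [hG]
  constructor
  · rintro _ ⟨a, z, γ, δ, ha, hγ, -, rfl⟩
    have hint := ha.intervalIntegrable_comp hT.le monotone_id
    have hkint := ha.intervalIntegrable_comp hT.le hkmono.monotone
    refine (Fobj_le_Gobj hRA hRP hρ hint hkint δ).trans
      (Gobj_le_Gobj_of_Gexponent_le hRA hRP hρ ?_)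
    exact Gexponent_le_Gexponent hsum hT.le hαA.le hlt.le hastar_min ha (hkint.sub hint) hγ
  · intro b hb
    have hγstar : γstar < R_A * zstar ^ 2 := by
      have : 0 < R_A * zstar ^ 2 := by positivity
      have : 0 ≤ R_P * (1 - zstar) ^ 2 := by positivity
      linarith
    refine le_of_tendsto (continuous_Gobj_gamma.continuousWithinAt (s := Ioi γstar)).tendsto ?_
    filter_upwards [Ioo_mem_nhdsGT hγstar] with γ hγ
    obtain ⟨δ, hδ⟩ := exists_Fobj_eq_Gobj (z := zstar) (γ := γ) (αP := αPhigh) (αA := αAhigh)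
      hRA hRP hρ intervalIntegrable_const (intervalIntegrable_const (c := k astar))
    exact hδ ▸ hb ⟨_, zstar, γ, δ, hastar, hγ.1, hγ.2, rfl⟩

/-- Lemma 3.3(iii)c: if `α_P^high > α_A^high`, the supremum of `F` over deterministic
actions, `z`, `δ` and `-R_P(1-z)² < γ < R_A z²` equals `G(a*, z*, α_A^high)`. -/
theorem sup_Q_mid_high (R_A R_P ρ T aMax : ℝ) (k : ℝ → ℝ)
    (hRA : 0 < R_A) (hRP : 0 < R_P) (hρ : 0 < ρ) (hT : 0 < T) (haMax : 0 < aMax)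
    (hkcont : Continuous k) (hkconv : StrictConvexOn ℝ Set.univ k) (hkmono : StrictMono k)
    (astar : ℝ) (hastar_mem : astar ∈ Set.Icc (0 : ℝ) aMax)
    (hastar_min : ∀ x ∈ Set.Icc (0 : ℝ) aMax, k astar - astar ≤ k x - x)
    (αPhigh αAhigh : ℝ) (hαA : 0 < αAhigh) (hlt : αAhigh < αPhigh) :
    IsLUB {x : ℝ | ∃ a z γ δ, IsAction T aMax a ∧
        -(R_P * (1 - z) ^ 2) < γ ∧ γ < R_A * z ^ 2 ∧
        x = Fobj R_A R_P ρ T k a z γ δ αPhigh αAhigh}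
      (Gobj R_A R_P ρ T k (fun _ => astar) (R_P / (R_A + R_P)) 0 αAhigh αAhigh) :=
  sup_Q_mid_high_general R_A R_P ρ T aMax k hRA hRP hρ hT hkmono astar hastar_mem hastar_min αPhigh
    αAhigh hαA hlt
end

section
/- (Deterministic form of Lemma 3.3(iv)) Let α_P^high > 0. For every α_A > 0, the supremum of F(a, z, R_A z², δ, α_P^high, α_A) over all deterministic actions a, z ∈ ℝ and δ ∈ ℝ equals G(a*, z*, α_P^high); in particular this supremum does not depend on α_A and it is attained at a = a*, z = z*. -/
/-!
With `γ = R_A z²` the `α_A`-terms of `F` cancel, and for fixed `a` and `z` what is left is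
`-exp (R_P (δ + A)) - ρ exp (R_A (B - δ))`. Shifting `δ` factors out `exp (λ (A + B))` with
`λ = R_A R_P / (R_A + R_P)`, and the remaining `exp (R_P t) + ρ exp (-R_A t)` is minimised at its
critical point; so the supremum over `δ` is `G(a, z, α_P)`. That quantity decreases in the
exponent `∫ (k ∘ a - a) + α_P T (R_P (1 - z)² + R_A z²) / 2`, which is minimised pointwise by
`a*` and by `z* = R_P / (R_A + R_P)`.
-/

open MeasureTheory

open Real

theorem isLeast_exp_add_mul_exp_neg {p q ρ : ℝ} (hp : 0 < p) (hq : 0 < q) (hρ : 0 < ρ) :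
    IsLeast (Set.range fun t => exp (p * t) + ρ * exp (-(q * t)))
      (ρ ^ (p / (q + p)) * ((q + p) / p) * (q / p) ^ (-(q / (q + p)))) := by
  have hS : 0 < q + p := by positivity
  have hqp : 0 < q / p := by positivity
  obtain ⟨t₀, ht₀⟩ : ∃ t₀, exp ((q + p) * t₀) = ρ * (q / p) :=
    ⟨log (ρ * (q / p)) / (q + p), by
      rw [mul_div_cancel₀ _ hS.ne', exp_log (by positivity)]⟩
  have hsplit : exp (p * t₀) = ρ * (q / p) * exp (-(q * t₀)) := by
    rw [← ht₀, ← exp_add]; ring_nf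
  have hcrit : p * exp (p * t₀) = q * (ρ * exp (-(q * t₀))) := by
    rw [hsplit]; field_simp
  have hval : exp (p * t₀) + ρ * exp (-(q * t₀))
      = ρ ^ (p / (q + p)) * ((q + p) / p) * (q / p) ^ (-(q / (q + p))) := by
    have hpow : exp (p * t₀) = ρ ^ (p / (q + p)) * (q / p) * (q / p) ^ (-(q / (q + p))) := by
      have hexp : p / (q + p) = 1 + -(q / (q + p)) := by field_simp; ring
      nth_rw 1 [mul_assoc, ← rpow_one (q / p)]
      rw [← rpow_add hqp, ← hexp, ← mul_rpow hρ.le hqp.le, ← ht₀, ← exp_mul]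
      congr 1
      field_simp
    have hY : ρ * exp (-(q * t₀)) = p / q * exp (p * t₀) := by
      rw [div_mul_eq_mul_div, hcrit, mul_div_cancel_left₀ _ hq.ne']
    rw [hY, hpow]
    field_simp
  refine ⟨⟨t₀, hval⟩, ?_⟩
  rintro _ ⟨t, rfl⟩
  -- both exponentials lie above their tangent lines at `t₀`, whose slopes cancel by `hcrit`
  have h₁ : exp (p * t₀) * (1 + p * (t - t₀)) ≤ exp (p * t) := by
    rw [show exp (p * t) = exp (p * t₀) * exp (p * (t - t₀)) by rw [← exp_add]; ring_nf]
    gcongr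
    linarith [add_one_le_exp (p * (t - t₀))]
  have h₂ : ρ * exp (-(q * t₀)) * (1 - q * (t - t₀)) ≤ ρ * exp (-(q * t)) := by
    rw [show ρ * exp (-(q * t)) = ρ * exp (-(q * t₀)) * exp (-(q * (t - t₀))) by
      rw [mul_assoc, ← exp_add]; ring_nf]
    gcongr
    linarith [add_one_le_exp (-(q * (t - t₀)))]
  rw [← hval]
  linear_combination h₁ + h₂ - (t - t₀) * hcrit

theorem isGreatest_neg_exp_sub_mul_exp {p q ρ : ℝ} (hp : 0 < p) (hq : 0 < q) (hρ : 0 < ρ)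
    (A B : ℝ) :
    IsGreatest (Set.range fun δ => -exp (p * (δ + A)) - ρ * exp (q * (B - δ)))
      (-(ρ ^ (p / (q + p)) * ((q + p) / p) * (q / p) ^ (-(q / (q + p)))
        * exp (q * p / (q + p) * (A + B)))) := by
  obtain ⟨⟨t₀, ht₀⟩, hle⟩ := isLeast_exp_add_mul_exp_neg hp hq hρ
  have hS : q + p ≠ 0 := by positivity
  -- the substitution `t = δ + A - q (A + B) / (q + p)` factors out `exp (λ (A + B))`
  have hfactor : ∀ δ, -exp (p * (δ + A)) - ρ * exp (q * (B - δ))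
      = -(exp (q * p / (q + p) * (A + B)) * (exp (p * (δ + A - q * (A + B) / (q + p)))
          + ρ * exp (-(q * (δ + A - q * (A + B) / (q + p)))))) := by
    intro δ
    have e₁ : exp (p * (δ + A)) = exp (q * p / (q + p) * (A + B))
        * exp (p * (δ + A - q * (A + B) / (q + p))) := by
      rw [← exp_add]; congr 1; field_simp; ring
    have e₂ : exp (q * (B - δ)) = exp (q * p / (q + p) * (A + B))
        * exp (-(q * (δ + A - q * (A + B) / (q + p)))) := by
      rw [← exp_add]; congr 1; field_simp; ring
    rw [e₁, e₂]
    ring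
  refine ⟨⟨t₀ - A + q * (A + B) / (q + p), ?_⟩, ?_⟩
  · dsimp only at ht₀ ⊢
    rw [hfactor, show t₀ - A + q * (A + B) / (q + p) + A - q * (A + B) / (q + p) = t₀ by ring,
      ht₀, mul_comm]
  · rintro _ ⟨δ, rfl⟩
    dsimp only
    rw [hfactor, mul_comm (exp _)]
    gcongr
    exact hle ⟨_, rfl⟩

theorem mul_one_sub_sq_add_mul_sq_le {p q : ℝ} (hp : 0 < p) (hq : 0 < q) (z : ℝ) :
    p * (1 - p / (q + p)) ^ 2 + q * (p / (q + p)) ^ 2 ≤ p * (1 - z) ^ 2 + q * z ^ 2 := by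
  have hS : 0 < q + p := by positivity
  have hgap : p * (1 - z) ^ 2 + q * z ^ 2 - (p * (1 - p / (q + p)) ^ 2 + q * (p / (q + p)) ^ 2)
      = (q + p) * (z - p / (q + p)) ^ 2 := by
    field_simp; ring
  rw [← sub_nonneg, hgap]
  positivity

namespace IsAction

variable {T aMax : ℝ} {a : ℝ → ℝ}

theorem intervalIntegrable_comp_s8 (ha : IsAction T aMax a) (hT : 0 ≤ T) {f : ℝ → ℝ}
    (hf : Continuous f) : IntervalIntegrable (fun s => f (a s)) volume 0 T := by
  obtain ⟨M, hM⟩ := (isCompact_Icc (a := 0) (b := aMax)).exists_bound_of_continuousOn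
    hf.continuousOn
  rw [intervalIntegrable_iff_integrableOn_Ioc_of_le hT]
  refine Measure.integrableOn_of_bounded (M := M) measure_Ioc_lt_top.ne
    (hf.measurable.comp ha.1).aestronglyMeasurable ?_
  filter_upwards [ae_restrict_mem measurableSet_Ioc] with s hs
  exact hM _ (ha.2 s (Set.Ioc_subset_Icc_self hs))

theorem mul_le_integral_comp (ha : IsAction T aMax a) (hT : 0 ≤ T) {g : ℝ → ℝ} {c : ℝ}
    (hg : Continuous g) (hc : ∀ x ∈ Set.Icc 0 aMax, c ≤ g x) :
    T * c ≤ ∫ s in (0 : ℝ)..T, g (a s) := by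
  simpa using intervalIntegral.integral_mono_on hT intervalIntegrable_const
    (ha.intervalIntegrable_comp_s8 hT hg) fun s hs => hc _ (ha.2 s hs)

end IsAction

section FirstBest

variable {R_A R_P ρ T : ℝ} {k : ℝ → ℝ}

theorem isGreatest_range_Fobj (hRA : 0 < R_A) (hRP : 0 < R_P) (hρ : 0 < ρ) {a : ℝ → ℝ}
    (hIa : IntervalIntegrable a volume 0 T)
    (hIk : IntervalIntegrable (fun s => k (a s)) volume 0 T) (z αP αA : ℝ) :
    IsGreatest (Set.range fun δ => Fobj R_A R_P ρ T k a z (R_A * z ^ 2) δ αP αA)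
      (Gobj R_A R_P ρ T k a z 0 αP αP) := by
  convert isGreatest_neg_exp_sub_mul_exp hRP hRA hρ
    (-((1 - z) * ∫ s in (0 : ℝ)..T, a s) + (R_P * (1 - z) ^ 2 / 2 + R_A * z ^ 2 / 2) * αP * T)
    ((∫ s in (0 : ℝ)..T, k (a s)) - z * ∫ s in (0 : ℝ)..T, a s) using 1
  · congr 1
    ext δ
    simp only [Fobj]
    ring_nf
  · rw [Gobj, intervalIntegral.integral_sub hIk hIa]
    ring_nf

theorem Gobj_le_Gobj_const (hRA : 0 < R_A) (hRP : 0 < R_P) (hρ : 0 < ρ) (hT : 0 ≤ T)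
    {αP aMax astar : ℝ} (hαP : 0 ≤ αP) (hk : Continuous k)
    (hastar_min : ∀ x ∈ Set.Icc 0 aMax, k astar - astar ≤ k x - x)
    {a : ℝ → ℝ} (ha : IsAction T aMax a) (z : ℝ) :
    Gobj R_A R_P ρ T k a z 0 αP αP
      ≤ Gobj R_A R_P ρ T k (fun _ => astar) (R_P / (R_A + R_P)) 0 αP αP := by
  have hint : T * (k astar - astar) ≤ ∫ s in (0 : ℝ)..T, (k (a s) - a s) :=
    ha.mul_le_integral_comp hT (hk.sub continuous_id) hastar_min
  have hquad := mul_one_sub_sq_add_mul_sq_le hRP hRA z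
  simp only [Gobj, intervalIntegral.integral_const, smul_eq_mul, sub_zero]
  gcongr -(_ * Real.exp (_ * (?_ + _ + T / 2 * ?_)))
  nlinarith [mul_le_mul_of_nonneg_left hquad hαP]

end FirstBest

theorem sup_Q_up_general (R_A R_P ρ T aMax : ℝ) (k : ℝ → ℝ)
    (hRA : 0 < R_A) (hRP : 0 < R_P) (hρ : 0 < ρ) (hT : 0 < T)
    (hkcont : Continuous k)
    (astar : ℝ) (hastar_mem : astar ∈ Set.Icc (0 : ℝ) aMax)
    (hastar_min : ∀ x ∈ Set.Icc (0 : ℝ) aMax, k astar - astar ≤ k x - x)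
    (αPhigh : ℝ) (hαP : 0 < αPhigh) (αA : ℝ) :
    IsGreatest {x : ℝ | ∃ a z δ, IsAction T aMax a ∧
        x = Fobj R_A R_P ρ T k a z (R_A * z ^ 2) δ αPhigh αA}
      (Gobj R_A R_P ρ T k (fun _ => astar) (R_P / (R_A + R_P)) 0 αPhigh αPhigh) ∧
    (∃ δ : ℝ, Fobj R_A R_P ρ T k (fun _ => astar) (R_P / (R_A + R_P))
        (R_A * (R_P / (R_A + R_P)) ^ 2) δ αPhigh αA
      = Gobj R_A R_P ρ T k (fun _ => astar) (R_P / (R_A + R_P)) 0 αPhigh αPhigh) := by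
  have hsup : ∀ a, IsAction T aMax a → ∀ z, IsGreatest
      (Set.range fun δ => Fobj R_A R_P ρ T k a z (R_A * z ^ 2) δ αPhigh αA)
      (Gobj R_A R_P ρ T k a z 0 αPhigh αPhigh) := fun a ha z =>
    isGreatest_range_Fobj hRA hRP hρ
      (by simpa using ha.intervalIntegrable_comp_s8 hT.le continuous_id)
      (ha.intervalIntegrable_comp_s8 hT.le hkcont) z αPhigh αA
  have hstar : IsAction T aMax fun _ => astar := ⟨measurable_const, fun _ _ => hastar_mem⟩
  obtain ⟨⟨δ₀, hδ₀⟩, -⟩ := hsup _ hstar (R_P / (R_A + R_P))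
  refine ⟨⟨⟨_, _, δ₀, hstar, hδ₀.symm⟩, ?_⟩, ⟨δ₀, hδ₀⟩⟩
  rintro _ ⟨a, z, δ, ha, rfl⟩
  exact ((hsup a ha z).2 ⟨δ, rfl⟩).trans
    (Gobj_le_Gobj_const hRA hRP hρ hT.le hαP.le hkcont hastar_min ha z)

/-- Lemma 3.3(iv): for any `α_A > 0`, the supremum of `F(a,z,R_A z²,δ,α_P^high,α_A)`
over deterministic actions, `z` and `δ`, equals `G(a*,z*,α_P^high)`; in particular it
does not depend on `α_A`, and it is attained at `a = a*`, `z = z*`. -/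
theorem sup_Q_up (R_A R_P ρ T aMax : ℝ) (k : ℝ → ℝ)
    (hRA : 0 < R_A) (hRP : 0 < R_P) (hρ : 0 < ρ) (hT : 0 < T) (haMax : 0 < aMax)
    (hkcont : Continuous k) (hkconv : StrictConvexOn ℝ Set.univ k) (hkmono : StrictMono k)
    (astar : ℝ) (hastar_mem : astar ∈ Set.Icc (0 : ℝ) aMax)
    (hastar_min : ∀ x ∈ Set.Icc (0 : ℝ) aMax, k astar - astar ≤ k x - x)
    (αPhigh : ℝ) (hαP : 0 < αPhigh) (αA : ℝ) (hαA : 0 < αA) :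
    IsGreatest {x : ℝ | ∃ a z δ, IsAction T aMax a ∧
        x = Fobj R_A R_P ρ T k a z (R_A * z ^ 2) δ αPhigh αA}
      (Gobj R_A R_P ρ T k (fun _ => astar) (R_P / (R_A + R_P)) 0 αPhigh αPhigh) ∧
    (∃ δ : ℝ, Fobj R_A R_P ρ T k (fun _ => astar) (R_P / (R_A + R_P))
        (R_A * (R_P / (R_A + R_P)) ^ 2) δ αPhigh αA
      = Gobj R_A R_P ρ T k (fun _ => astar) (R_P / (R_A + R_P)) 0 αPhigh αPhigh) :=
  sup_Q_up_general R_A R_P ρ T aMax k hRA hRP hρ hT hkcont astar hastar_mem hastar_min αPhigh hαP αA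
end
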